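/- Let Ψ : ℝⁿ → ℝᵐ be a Borel measurable function, S ⊆ ℝⁿ, and Ξ ∈ ℝᵐ. Then there exists a Borel probability measure μ on ℝⁿ with support contained in S such that E_μ[Ψ(X)] = Ξ if and only if Ξ belongs to the convex hull of Ψ(S). Moreover, in the forward direction the measure μ can be taken to have finite support. -/

import Mathlib

/-!
If `Ξ = ∑ wᵢ Ψ(pᵢ)` with `pᵢ ∈ S`, the measure `∑ wᵢ δ_{pᵢ}` has finite support in `S` and
expectation `Ξ`. Conversely, a probability measure on `ℝⁿ` is concentrated on its support, so
`Ψ(X) ∈ Ψ(S)` almost surely, and the barycenter `b` of a probability measure on a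
finite-dimensional space lies in the convex hull of any set `A` carrying it. For the latter,
suppose `b ∉ convexHull A` and let `W` be a subspace containing `A - b`. Weak separation inside
`W` (which in finite dimension needs no closedness) gives a functional `g`, nonzero on `W`, with
`g ≤ g b` on `A`; since `∫ g(f) = g b`, almost surely `g(f) = g b`, so `A` may be replaced by
`A ∩ {g = g b}` and `W` by `W ⊓ ker g`, which is strictly smaller.
-/

open MeasureTheory Set Filter Topology
open scoped BigOperators ENNReal

noncomputable section

def msupport {E : Type*} [TopologicalSpace E] [MeasurableSpace E]
    (μ : Measure E) : Set E :=
  {x | ∀ U : Set E, IsOpen U → x ∈ U → μ U ≠ 0}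

section Support

variable {X : Type*} [TopologicalSpace X] [MeasurableSpace X]

theorem msupport_eq_support (μ : Measure X) : msupport μ = μ.support := by
  ext x
  simp only [msupport, Measure.support_eq_forall_isOpen, mem_ofPred_eq, pos_iff_ne_zero]
  exact forall_congr' fun U => imp.swap

theorem ae_mem_msupport [HereditarilyLindelofSpace X] (μ : Measure X) :
    ∀ᵐ x ∂μ, x ∈ msupport μ :=
  msupport_eq_support μ ▸ Measure.support_mem_ae

end Support

section Separation

variable {F : Type*} [NormedAddCommGroup F] [NormedSpace ℝ F] [FiniteDimensional ℝ F]

theorem exists_ne_zero_forall_eq_of_vectorSpan_ne_top {C : Set F} (hC : vectorSpan ℝ C ≠ ⊤) :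
    ∃ f : StrongDual ℝ F, f ≠ 0 ∧ ∀ a ∈ C, ∀ a' ∈ C, f a = f a' := by
  obtain ⟨f, hf0, hfC⟩ := Submodule.exists_dual_map_eq_bot_of_lt_top hC.lt_top inferInstance
  refine ⟨LinearMap.toContinuousLinearMap f, by simpa using hf0, fun a ha a' ha' => ?_⟩
  have : f (a -ᵥ a') = 0 := LinearMap.le_ker_iff_map.2 hfC (vsub_mem_vectorSpan ℝ ha ha')
  simpa [sub_eq_zero] using this

theorem Convex.exists_ne_zero_forall_le_of_notMem [Nontrivial F] {C : Set F} (hC : Convex ℝ C)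
    {x : F} (hx : x ∉ C) : ∃ f : StrongDual ℝ F, f ≠ 0 ∧ ∀ a ∈ C, f a ≤ f x := by
  by_cases hint : (interior C).Nonempty
  · exact geometric_hahn_banach_of_nonempty_interior_point hC (fun h => hx (interior_subset h)) hint
  have hspan : vectorSpan ℝ C ≠ ⊤ := by
    rcases C.eq_empty_or_nonempty with rfl | hne
    · simp
    exact fun h => hint <| hC.interior_nonempty_iff_affineSpan_eq_top.2 <|
      (AffineSubspace.affineSpan_eq_top_iff_vectorSpan_eq_top_of_nonempty ℝ F F hne).2 h
  obtain ⟨f, hf0, hfC⟩ := exists_ne_zero_forall_eq_of_vectorSpan_ne_top hspan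
  by_cases hle : ∀ a ∈ C, f a ≤ f x
  · exact ⟨f, hf0, hle⟩
  obtain ⟨a₀, ha₀, hlt⟩ := not_forall₂.1 hle
  refine ⟨-f, neg_ne_zero.2 hf0, fun a ha => ?_⟩
  simp only [neg_apply, neg_le_neg_iff, hfC a ha a₀ ha₀]
  exact (not_le.1 hlt).le

end Separation

section Barycenter

variable {α F : Type*} [MeasurableSpace α] [NormedAddCommGroup F] [NormedSpace ℝ F]

theorem ae_apply_eq_apply_integral_of_ae_le [CompleteSpace F] {μ : Measure α}
    [IsProbabilityMeasure μ] {f : α → F} (hf : Integrable f μ) (g : StrongDual ℝ F)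
    (hle : ∀ᵐ x ∂μ, g (f x) ≤ g (∫ x, f x ∂μ)) : ∀ᵐ x ∂μ, g (f x) = g (∫ x, f x ∂μ) := by
  set c := g (∫ x, f x ∂μ)
  have hgf := g.integrable_comp hf
  have hint : Integrable (fun x => c - g (f x)) μ := (integrable_const c).sub hgf
  have hnonneg : 0 ≤ᵐ[μ] fun x => c - g (f x) := hle.mono fun x hx => sub_nonneg.2 hx
  have hzero : ∫ x, (c - g (f x)) ∂μ = 0 := by
    rw [integral_sub (integrable_const c) hgf, integral_const, g.integral_comp_comm hf]
    simp [c]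
  filter_upwards [(integral_eq_zero_iff_of_nonneg_ae hnonneg hint).1 hzero] with x hx
  exact (sub_eq_zero.1 hx).symm

variable [FiniteDimensional ℝ F]

theorem integral_mem_convexHull_of_forall_sub_mem {μ : Measure α} [IsProbabilityMeasure μ]
    {f : α → F} (hf : Integrable f μ) (W : Submodule ℝ F) {A : Set F} (hA : ∀ᵐ x ∂μ, f x ∈ A)
    (hAW : ∀ a ∈ A, a - ∫ x, f x ∂μ ∈ W) : ∫ x, f x ∂μ ∈ convexHull ℝ A := by
  induction W using WellFoundedLT.induction generalizing A with
  | ind W ih =>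
    set b := ∫ x, f x ∂μ
    by_contra hb
    obtain ⟨x₀, hx₀⟩ := hA.exists
    have : Nontrivial W := nontrivial_of_ne ⟨f x₀ - b, hAW _ hx₀⟩ 0 fun h => hb <| by
      rw [← sub_eq_zero.1 (congrArg Subtype.val h)]
      exact subset_convexHull ℝ A hx₀
    have hC : Convex ℝ (W.subtype ⁻¹' ((b + ·) ⁻¹' convexHull ℝ A)) :=
      ((convex_convexHull ℝ A).translate_preimage_right b).linear_preimage W.subtype
    obtain ⟨ℓ, hℓ0, hℓ⟩ := hC.exists_ne_zero_forall_le_of_notMem (x := 0) (by simpa using hb)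
    obtain ⟨g, hgℓ, -⟩ := exists_extension_norm_eq W ℓ
    have hgA : ∀ a ∈ A, g a ≤ g b := fun a ha => by
      have := hℓ ⟨a - b, hAW a ha⟩ (by simpa using subset_convexHull ℝ A ha)
      rwa [← hgℓ, map_zero, map_sub, sub_nonpos] at this
    have hfb := ae_apply_eq_apply_integral_of_ae_le hf g (hA.mono fun x hx => hgA _ hx)
    have hlt : W ⊓ LinearMap.ker g.toLinearMap < W := by
      obtain ⟨w, hw⟩ := DFunLike.ne_iff.1 hℓ0
      refine SetLike.lt_iff_le_and_exists.2 ⟨inf_le_left, (w : F), w.2, fun hw' => hw ?_⟩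
      rw [← hgℓ]
      exact hw'.2
    refine hb (convexHull_mono inter_subset_left (ih _ hlt (A := A ∩ {a | g a = g b})
      (hA.and hfb) fun a ha => ⟨hAW a ha.1, ?_⟩))
    simpa [sub_eq_zero] using ha.2

theorem integral_mem_convexHull {μ : Measure α} [IsProbabilityMeasure μ] {f : α → F}
    (hf : Integrable f μ) {A : Set F} (hA : ∀ᵐ x ∂μ, f x ∈ A) : ∫ x, f x ∂μ ∈ convexHull ℝ A :=
  integral_mem_convexHull_of_forall_sub_mem hf ⊤ hA fun _ _ => Submodule.mem_top

end Barycenter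

section DiracCombination

variable {X E : Type*} [TopologicalSpace X] [T1Space X] [MeasurableSpace X]
  [MeasurableSingletonClass X] [NormedAddCommGroup E] [NormedSpace ℝ E] [CompleteSpace E]

theorem msupport_sum_dirac_subset {ι : Type*} [Finite ι] (c : ι → ℝ≥0∞) (p : ι → X) :
    msupport (Measure.sum fun i => c i • Measure.dirac (p i)) ⊆ range p := by
  rw [msupport_eq_support]
  refine Measure.support_subset_of_isClosed (finite_range p).isClosed <| Measure.ae_sum_iff.2
    fun i => Measure.ae_smul_measure ((ae_dirac_iff (finite_range p).measurableSet).2 ?_) _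
  exact mem_range_self i

theorem exists_finite_msupport_integral_eq_of_mem_convexHull {Ψ : X → E} {S : Set X} {Ξ : E}
    (h : Ξ ∈ convexHull ℝ (Ψ '' S)) :
    ∃ μ : Measure X, IsProbabilityMeasure μ ∧ msupport μ ⊆ S ∧ (msupport μ).Finite ∧
      Integrable Ψ μ ∧ ∫ x, Ψ x ∂μ = Ξ := by
  obtain ⟨ι, _, w, z, hw0, hw1, hz, rfl⟩ := mem_convexHull_iff_exists_fintype.1 h
  choose p hpS hpz using hz
  have hc : ∀ i, ENNReal.ofReal (w i) ≠ ∞ := fun _ => ENNReal.ofReal_ne_top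
  have hsum : Summable fun i => (ENNReal.ofReal (w i)).toReal * ‖Ψ (p i)‖ := Summable.of_finite
  have hsupp := msupport_sum_dirac_subset (fun i => ENNReal.ofReal (w i)) p
  refine ⟨_, (hw1 ▸ hasSum_fintype w).isProbabilityMeasure_sum_dirac hw0,
    hsupp.trans (range_subset_iff.2 hpS), (finite_range p).subset hsupp,
    integrable_sum_dirac hc hsum, ?_⟩
  rw [integral_sum_dirac_eq_tsum hc hsum, tsum_fintype]
  simp [ENNReal.toReal_ofReal (hw0 _), hpz]

end DiracCombination

theorem forall_integrable_eval_and_integral_eval_eq_iff {X ι : Type*} [MeasurableSpace X]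
    [Fintype ι] {E : ι → Type*} [∀ i, NormedAddCommGroup (E i)] [∀ i, NormedSpace ℝ (E i)]
    [∀ i, CompleteSpace (E i)] {μ : Measure X} {f : X → ∀ i, E i} {c : ∀ i, E i} :
    ((∀ i, Integrable (fun x => f x i) μ) ∧ (fun i => ∫ x, f x i ∂μ) = c) ↔
      Integrable f μ ∧ ∫ x, f x ∂μ = c := by
  rw [integrable_pi_iff]
  refine and_congr_right fun hf => ?_
  rw [← funext (eval_integral hf)]

theorem exists_measure_expectation_iff_mem_convexHull_general {n m : ℕ}
    (Ψ : (Fin n → ℝ) → Fin m → ℝ)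
    (S : Set (Fin n → ℝ)) (Ξ : Fin m → ℝ) :
    ((∃ μ : Measure (Fin n → ℝ), IsProbabilityMeasure μ ∧ msupport μ ⊆ S ∧
        (∀ i, Integrable (fun x => Ψ x i) μ) ∧ (fun i => ∫ x, Ψ x i ∂μ) = Ξ) ↔
      Ξ ∈ convexHull ℝ (Ψ '' S)) ∧
    (Ξ ∈ convexHull ℝ (Ψ '' S) →
      ∃ μ : Measure (Fin n → ℝ), IsProbabilityMeasure μ ∧ msupport μ ⊆ S ∧
        (msupport μ).Finite ∧
        (∀ i, Integrable (fun x => Ψ x i) μ) ∧ (fun i => ∫ x, Ψ x i ∂μ) = Ξ) := by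
  simp only [forall_integrable_eval_and_integral_eval_eq_iff]
  refine ⟨⟨?_, fun h => ?_⟩, exists_finite_msupport_integral_eq_of_mem_convexHull⟩
  · rintro ⟨μ, hμ, hS, hΨ, rfl⟩
    exact integral_mem_convexHull hΨ
      ((ae_mem_msupport μ).mono fun x hx => mem_image_of_mem Ψ (hS hx))
  · obtain ⟨μ, hμ, hS, -, hΨ⟩ := exists_finite_msupport_integral_eq_of_mem_convexHull h
    exact ⟨μ, hμ, hS, hΨ⟩

/-- existence of a probability measure with support in `S` whose
expectation of `Ψ` is `Ξ` is equivalent to `Ξ ∈ H(Ψ(S))`; moreover in the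
forward direction the measure can be taken with finite support. -/
theorem exists_measure_expectation_iff_mem_convexHull {n m : ℕ}
    (Ψ : (Fin n → ℝ) → Fin m → ℝ) (hΨ : Measurable Ψ)
    (S : Set (Fin n → ℝ)) (Ξ : Fin m → ℝ) :
    ((∃ μ : Measure (Fin n → ℝ), IsProbabilityMeasure μ ∧ msupport μ ⊆ S ∧
        (∀ i, Integrable (fun x => Ψ x i) μ) ∧ (fun i => ∫ x, Ψ x i ∂μ) = Ξ) ↔
      Ξ ∈ convexHull ℝ (Ψ '' S)) ∧
    (Ξ ∈ convexHull ℝ (Ψ '' S) →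
      ∃ μ : Measure (Fin n → ℝ), IsProbabilityMeasure μ ∧ msupport μ ⊆ S ∧
        (msupport μ).Finite ∧
        (∀ i, Integrable (fun x => Ψ x i) μ) ∧ (fun i => ∫ x, Ψ x i ∂μ) = Ξ) :=
  exists_measure_expectation_iff_mem_convexHull_general Ψ S Ξ
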